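/- In the ladder graph L_n = P_n □ K_2 (n ≥ 2), with P_n = a_1...a_n and K_2 = c_1c_2, the resistance distance between diagonally opposite corners satisfies R_{L_n}[(a_1,c_1),(a_n,c_2)] = (n−1)/2 + (1+α^{n−1})(2 + 2α^{n+1} + 2α^n + 2α)/(4√3(1−α^{2n})), where α = 2 − √3. -/

import Mathlib

open Matrix Finset

open Classical in
/-- The Moore–Penrose pseudoinverse of a real square matrix, defined via the
four Penrose conditions (it is unique when it exists). -/
noncomputable def Matrix.mpinv {m : Type*} [Fintype m] [DecidableEq m]
    (A : Matrix m m ℝ) : Matrix m m ℝ :=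
  if h : ∃ B : Matrix m m ℝ,
      A * B * A = A ∧ B * A * B = B ∧ (A * B)ᵀ = A * B ∧ (B * A)ᵀ = B * A
  then h.choose else 0

/-- Effective resistance between `u` and `v` with respect to a (weighted)
Laplacian matrix `L`:  `(e_u - e_v)ᵀ L⁺ (e_u - e_v)`. -/
noncomputable def effRes {m : Type*} [Fintype m] [DecidableEq m]
    (L : Matrix m m ℝ) (u v : m) : ℝ :=
  (Pi.single u 1 - Pi.single v 1) ⬝ᵥ (L.mpinv *ᵥ (Pi.single u 1 - Pi.single v 1))

/-- The (real) Laplacian matrix of a simple graph. -/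
noncomputable def lapm {V : Type*} [Fintype V] [DecidableEq V]
    (G : SimpleGraph V) : Matrix V V ℝ :=
  letI := Classical.decRel G.Adj
  G.lapMatrix ℝ

/-- Resistance distance between two vertices of a simple graph. -/
noncomputable def resDist {V : Type*} [Fintype V] [DecidableEq V]
    (G : SimpleGraph V) (u v : V) : ℝ :=
  effRes (lapm G) u v

/-- Resistance diameter of a simple graph. -/
noncomputable def resDiam {V : Type*} [Fintype V] [DecidableEq V]
    (G : SimpleGraph V) : ℝ :=
  ⨆ p : V × V, resDist G p.1 p.2

/-- The weighted Laplacian of the cone over `G` with apex `Sum.inr ()`: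
edges of `G` have conductance `1` (unit resistance), and each vertex of `G`
is joined to the apex by an edge of conductance `m` (resistance `1/m`). -/
noncomputable def coneLap {V : Type*} [Fintype V] [DecidableEq V]
    (G : SimpleGraph V) (m : ℝ) : Matrix (V ⊕ Unit) (V ⊕ Unit) ℝ :=
  letI := Classical.decRel G.Adj
  let W : Matrix (V ⊕ Unit) (V ⊕ Unit) ℝ := fun i j =>
    match i, j with
    | Sum.inl a, Sum.inl b => if G.Adj a b then 1 else 0
    | Sum.inl _, Sum.inr _ => m
    | Sum.inr _, Sum.inl _ => m
    | Sum.inr _, Sum.inr _ => 0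
  Matrix.of fun i j => (if i = j then ∑ k, W i k else 0) - W i j

/-- The `k`-dimensional hypercube graph `Q_k`. -/
def hypercube (k : ℕ) : SimpleGraph (Fin k → Bool) where
  Adj x y := (Finset.univ.filter fun i => x i ≠ y i).card = 1
  symm := by
    refine ⟨?_⟩
    intro x y h
    rw [← h]
    congr 1
    ext i
    simp [ne_comm]
  loopless := by refine ⟨?_⟩; intro x; simp

/-- The join `G + H` of two graphs on disjoint vertex sets. -/
def graphJoin {V W : Type*} (G : SimpleGraph V) (H : SimpleGraph W) :
    SimpleGraph (V ⊕ W) where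
  Adj x y :=
    match x, y with
    | Sum.inl a, Sum.inl b => G.Adj a b
    | Sum.inr a, Sum.inr b => H.Adj a b
    | Sum.inl _, Sum.inr _ => True
    | Sum.inr _, Sum.inl _ => True
  symm := by
    refine ⟨?_⟩
    rintro (a | a) (b | b) h
    · exact G.symm.symm _ _ h
    · trivial
    · trivial
    · exact H.symm.symm _ _ h
  loopless := by
    refine ⟨?_⟩
    rintro (a | a) h
    · exact G.loopless.irrefl a h
    · exact H.loopless.irrefl a h

/-!
The potential of a unit current from `(0,0)` to `(n-1,1)` is `x (i, b) = (-i ± v i) / 2`: the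
rail-symmetric part `-i/2` carries the current along the ladder, and the rail-antisymmetric part
solves `v (i-1) + v (i+1) = 4 v i` inside with `3 v - (neighbour) = 1` at both ends. As
`α = 2 - √3` is a root of `t² - 4t + 1`, `v i` is a multiple of `α ^ i + α ^ (n-1-i)`.
For a connected graph `(L + J/|V|)⁻¹ - J/|V|` is the pseudoinverse of the Laplacian `L`, so the
resistance between `u` and `v` is `x u - x v` for any solution of `L x = e_u - e_v`; here this is
`(n-1)/2 + v 0`.
-/

namespace Matrix

variable {m R : Type*} [Fintype m]

def IsPenroseInv [CommRing R] (A B : Matrix m m R) : Prop :=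
  A * B * A = A ∧ B * A * B = B ∧ (A * B)ᵀ = A * B ∧ (B * A)ᵀ = B * A

/-- `A * B` and `B * A` both equal `1 - P` for `B = (A + P)⁻¹ - P`. -/
theorem isPenroseInv_inv_add_sub [DecidableEq m] [CommRing R] {A P : Matrix m m R} (hA : A.IsSymm)
    (hP : P.IsSymm) (hPP : P * P = P) (hAP : A * P = 0) (hM : IsUnit (A + P)) :
    A.IsPenroseInv ((A + P)⁻¹ - P) := by
  set M := A + P
  have hdet : IsUnit M.det := (isUnit_iff_isUnit_det M).mp hM
  have hPA : P * A = 0 := by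
    rw [← hP.eq, ← hA.eq, ← transpose_mul, hAP, transpose_zero]
  have hMP : M * P = P := by rw [add_mul, hAP, hPP, zero_add]
  have hPM : P * M = P := by rw [mul_add, hPA, hPP, zero_add]
  have hMiP : M⁻¹ * P = P := by
    rw [← hMP, ← Matrix.mul_assoc, nonsing_inv_mul M hdet, Matrix.one_mul, hMP]
  have hPMi : P * M⁻¹ = P := by
    rw [← hPM, Matrix.mul_assoc, mul_nonsing_inv M hdet, Matrix.mul_one, hPM]
  have hAeq : A = M - P := (add_sub_cancel_right A P).symm
  have hAB : A * (M⁻¹ - P) = 1 - P := by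
    rw [hAeq, Matrix.sub_mul, Matrix.mul_sub, Matrix.mul_sub, mul_nonsing_inv M hdet, hMP,
      hPMi, hPP]
    abel
  have hBA : (M⁻¹ - P) * A = 1 - P := by
    rw [hAeq, Matrix.sub_mul, Matrix.mul_sub, Matrix.mul_sub, nonsing_inv_mul M hdet, hMiP,
      hPM, hPP]
    abel
  have hsymm : (1 - P)ᵀ = 1 - P := by rw [transpose_sub, transpose_one, hP.eq]
  refine ⟨?_, ?_, by rw [hAB, hsymm], by rw [hBA, hsymm]⟩
  · rw [hAB, Matrix.sub_mul, Matrix.one_mul, hPA, sub_zero]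
  · rw [hBA, Matrix.sub_mul, Matrix.one_mul, Matrix.mul_sub, hPMi, hPP, sub_self, sub_zero]

variable (m) in
noncomputable def averaging : Matrix m m ℝ :=
  of fun _ _ => (Fintype.card m : ℝ)⁻¹

theorem isSymm_averaging : (averaging m).IsSymm := rfl

theorem averaging_mulVec (x : m → ℝ) :
    averaging m *ᵥ x = fun _ => (Fintype.card m : ℝ)⁻¹ * ∑ i, x i := by
  ext
  simp [averaging, mulVec, dotProduct, Finset.mul_sum]

theorem averaging_mul_self [Nonempty m] : averaging m * averaging m = averaging m := by
  have hcard : (Fintype.card m : ℝ) ≠ 0 := Nat.cast_ne_zero.mpr Fintype.card_ne_zero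
  ext
  simp [averaging, mul_apply, hcard]

theorem mul_mpinv_mul_self [DecidableEq m] {A : Matrix m m ℝ} (h : ∃ B, A.IsPenroseInv B) :
    A * A.mpinv * A = A := by
  unfold IsPenroseInv at h
  rw [mpinv, dif_pos h]
  exact h.choose_spec.1

end Matrix

theorem effRes_eq_sub_of_mulVec_eq {m : Type*} [Fintype m] [DecidableEq m] {A : Matrix m m ℝ}
    (hA : A.IsSymm) (hpinv : ∃ B, A.IsPenroseInv B) {u v : m} {x : m → ℝ}
    (hx : A *ᵥ x = Pi.single u 1 - Pi.single v 1) :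
    effRes A u v = x u - x v := by
  calc effRes A u v = (x ᵥ* A) ⬝ᵥ (A.mpinv *ᵥ (A *ᵥ x)) := by
        rw [effRes, ← hx, ← mulVec_transpose, hA.eq]
    _ = x ⬝ᵥ ((A * A.mpinv * A) *ᵥ x) := by
        rw [← dotProduct_mulVec, mulVec_mulVec, mulVec_mulVec, Matrix.mul_assoc]
    _ = x u - x v := by
        rw [Matrix.mul_mpinv_mul_self hpinv, hx, dotProduct_sub, dotProduct_single,
          dotProduct_single, mul_one, mul_one]


namespace SimpleGraph

variable {V : Type*} [Fintype V] [DecidableEq V]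

theorem isSymm_lapm (G : SimpleGraph V) : (lapm G).IsSymm := by
  classical
  exact isSymm_lapMatrix ℝ G

theorem lapm_mul_averaging (G : SimpleGraph V) : lapm G * averaging V = 0 := by
  classical
  ext i j
  have h := congrFun (lapMatrix_mulVec_const_eq_zero (R := ℝ) G) i
  simp only [mulVec, dotProduct, mul_one, Pi.zero_apply] at h
  simp [averaging, mul_apply, ← Finset.sum_mul, lapm, h]

theorem isUnit_lapm_add_averaging {G : SimpleGraph V} (hG : G.Connected) :
    IsUnit (lapm G + averaging V) := by
  classical
  have : Nonempty V := hG.nonempty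
  have hcard : (Fintype.card V : ℝ) ≠ 0 := Nat.cast_ne_zero.mpr Fintype.card_ne_zero
  have hPL : averaging V * lapm G = 0 := by
    rw [← isSymm_averaging.eq, ← (isSymm_lapm G).eq, ← transpose_mul, lapm_mul_averaging,
      transpose_zero]
  have hker : ∀ x, (lapm G + averaging V) *ᵥ x = 0 → x = 0 := by
    intro x hx
    have hPx : averaging V *ᵥ x = 0 := by
      simpa [mulVec_mulVec, mul_add, hPL, averaging_mul_self] using
        congrArg (averaging V *ᵥ ·) hx
    have hLx : lapm G *ᵥ x = 0 := by simpa [add_mulVec, hPx] using hx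
    have hconst : ∀ i j, x i = x j := fun i j =>
      (lapMatrix_mulVec_eq_zero_iff_forall_reachable G).mp hLx i j (hG.preconnected i j)
    ext i
    have hsum := congrFun hPx i
    simp only [averaging_mulVec, Finset.sum_congr rfl fun j _ => hconst j i, Finset.sum_const,
      Finset.card_univ, nsmul_eq_mul, Pi.zero_apply] at hsum
    simpa [hcard] using hsum
  rw [← mulVec_injective_iff_isUnit]
  exact fun x y hxy => sub_eq_zero.mp (hker _ (by rw [mulVec_sub, hxy, sub_self]))

theorem exists_isPenroseInv_lapm {G : SimpleGraph V} (hG : G.Connected) :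
    ∃ B, (lapm G).IsPenroseInv B :=
  have : Nonempty V := hG.nonempty
  ⟨_, isPenroseInv_inv_add_sub (isSymm_lapm G) isSymm_averaging averaging_mul_self
    (lapm_mul_averaging G) (isUnit_lapm_add_averaging hG)⟩

theorem resDist_eq_sub_of_lapm_mulVec_eq {G : SimpleGraph V} (hG : G.Connected) {u v : V}
    {x : V → ℝ} (hx : lapm G *ᵥ x = Pi.single u 1 - Pi.single v 1) :
    resDist G u v = x u - x v :=
  effRes_eq_sub_of_mulVec_eq (isSymm_lapm G) (exists_isPenroseInv_lapm hG) hx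

theorem lapm_mulVec_apply (G : SimpleGraph V) [DecidableRel G.Adj] (x : V → ℝ) (p : V) :
    (lapm G *ᵥ x) p = ∑ q, if G.Adj p q then x p - x q else 0 := by
  rw [← Finset.sum_filter, Finset.sum_sub_distrib, Finset.sum_const, nsmul_eq_mul, lapm,
    lapMatrix_mulVec_apply, ← card_neighborFinset_eq_degree, neighborFinset_eq_filter]
  congr

theorem lapm_boxProd_mulVec_apply {W : Type*} [Fintype W] [DecidableEq W]
    (G : SimpleGraph V) (H : SimpleGraph W) (x : V × W → ℝ) (a : V) (b : W) :
    (lapm (G □ H) *ᵥ x) (a, b)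
      = (lapm G *ᵥ fun a' => x (a', b)) a + (lapm H *ᵥ fun b' => x (a, b')) b := by
  classical
  have hsplit : ∀ a' b', (if (G □ H).Adj (a, b) (a', b') then x (a, b) - x (a', b') else 0)
      = (if G.Adj a a' ∧ b = b' then x (a, b) - x (a', b') else 0)
        + (if H.Adj b b' ∧ a = a' then x (a, b) - x (a', b') else 0) := by
    intro a' b'
    by_cases hG : G.Adj a a' <;> by_cases hH : H.Adj b b' <;> by_cases ha : a = a' <;>
      by_cases hb : b = b' <;> simp_all
  simp only [lapm_mulVec_apply, Fintype.sum_prod_type, hsplit, Finset.sum_add_distrib, ite_and]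
  rw [Finset.sum_comm (f := fun a' b' => if H.Adj b b' then _ else _)]
  simp

theorem lapm_pathGraph_mulVec_apply {n : ℕ} (f : ℕ → ℝ) (i : Fin n) :
    (lapm (pathGraph n) *ᵥ fun j => f j) i
      = (if (i : ℕ) + 1 < n then f i - f (i + 1) else 0)
        + (if (i : ℕ) = 0 then 0 else f i - f (i - 1)) := by
  classical
  have hsplit : ∀ j : ℕ, (if (i : ℕ) + 1 = j ∨ j + 1 = i then f i - f j else 0)
      = (if (i : ℕ) + 1 = j then f i - f j else 0) + (if j + 1 = i then f i - f j else 0) := by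
    intro j
    by_cases h₁ : (i : ℕ) + 1 = j <;> by_cases h₂ : j + 1 = i <;> simp [h₁, h₂]
    omega
  simp only [lapm_mulVec_apply, pathGraph_adj]
  rw [Fin.sum_univ_eq_sum_range (fun j => if (i : ℕ) + 1 = j ∨ j + 1 = i then f i - f j else 0),
    Finset.sum_congr rfl fun j _ => hsplit j, Finset.sum_add_distrib, Finset.sum_ite_eq]
  congr 1
  · simp
  · by_cases hi : (i : ℕ) = 0
    · simp [hi]
    obtain ⟨k, hk⟩ := Nat.exists_eq_add_one_of_ne_zero hi
    have hkn : k < n := by omega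
    rw [hk]
    simp [hkn]

theorem lapm_pathGraph_two_mulVec_apply (y : Fin 2 → ℝ) (b : Fin 2) :
    (lapm (pathGraph 2) *ᵥ y) b = y b - y b.rev := by
  classical
  fin_cases b <;> simp [lapm_mulVec_apply, Fin.sum_univ_two, pathGraph_adj]

end SimpleGraph

open SimpleGraph

noncomputable def ladderPotential {n : ℕ} (v : ℕ → ℝ) (p : Fin n × Fin 2) : ℝ :=
  (-(p.1 : ℝ) + if p.2 = 0 then v p.1 else -v p.1) / 2

theorem lapm_ladder_mulVec_ladderPotential {n : ℕ} (hn : 2 ≤ n) {v : ℕ → ℝ}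
    (h_first : 3 * v 0 - v 1 = 1) (h_last : 3 * v (n - 1) - v (n - 2) = 1)
    (h_rec : ∀ k, k + 2 < n → v k + v (k + 2) = 4 * v (k + 1)) :
    lapm (pathGraph n □ pathGraph 2) *ᵥ ladderPotential v
      = Pi.single (⟨0, zero_lt_two.trans_le hn⟩, 0) 1
        - Pi.single (⟨n - 1, Nat.sub_one_lt_of_lt hn⟩, 1) 1 := by
  ext ⟨i, b⟩
  rw [lapm_boxProd_mulVec_apply,
    show (fun j => ladderPotential v (j, b))
      = fun j : Fin n => (-(j : ℝ) + if b = 0 then v j else -v j) / 2 from rfl,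
    lapm_pathGraph_mulVec_apply (fun j : ℕ => (-(j : ℝ) + if b = 0 then v j else -v j) / 2),
    lapm_pathGraph_two_mulVec_apply]
  obtain ⟨i, hi⟩ := i
  simp only [ladderPotential, Pi.sub_apply, Pi.single_apply, Prod.mk.injEq, Fin.mk.injEq]
  cases i with
  | zero =>
    fin_cases b <;> simp [show 1 < n by omega, show 0 ≠ n - 1 by omega] <;> linarith
  | succ k =>
    by_cases hk : k + 2 < n
    · have := h_rec k hk
      fin_cases b <;> simp [hk, show k + 1 ≠ n - 1 by omega] <;> linarith
    · obtain rfl : n = k + 2 := by omega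
      simp only [Nat.add_sub_cancel, show k + 2 - 1 = k + 1 by omega] at h_last
      fin_cases b <;> simp <;> linarith

/-- The denominator is `3 (1 + α ^ (n-1)) - (α + α ^ (n-2))` (using `α² + 1 = 4α`),
which makes `3 v 0 - v 1 = 1`. -/
noncomputable def ladderAmplitude (α : ℝ) (n i : ℕ) : ℝ :=
  (α ^ i + α ^ (n - 1 - i)) / ((3 - α) * (1 - α ^ n))

section ladderAmplitude

variable {α : ℝ} {n : ℕ}

theorem ladderAmplitude_rec (hα : α ^ 2 - 4 * α + 1 = 0) {k : ℕ} (hk : k + 2 < n) :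
    ladderAmplitude α n k + ladderAmplitude α n (k + 2) = 4 * ladderAmplitude α n (k + 1) := by
  obtain ⟨j, hj⟩ : ∃ j, n - 1 - (k + 2) = j := ⟨_, rfl⟩
  simp only [ladderAmplitude, show n - 1 - k = j + 2 by omega,
    show n - 1 - (k + 1) = j + 1 by omega, hj, ← add_div, mul_div_assoc']
  congr 1
  linear_combination (α ^ k + α ^ j) * hα

theorem ladderAmplitude_symm (i : ℕ) (hi : i ≤ n - 1) :
    ladderAmplitude α n (n - 1 - i) = ladderAmplitude α n i := by
  rw [ladderAmplitude, ladderAmplitude, Nat.sub_sub_self hi, add_comm]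

theorem ladderAmplitude_boundary_zero (hα : α ^ 2 - 4 * α + 1 = 0) (hαn : α ^ n ≠ 1)
    (hn : 2 ≤ n) :
    3 * ladderAmplitude α n 0 - ladderAmplitude α n 1 = 1 := by
  obtain ⟨m, rfl⟩ : ∃ m, n = m + 2 := ⟨n - 2, by omega⟩
  have h3 : 3 - α ≠ 0 := fun h => by
    rw [show α = 3 by linarith] at hα
    norm_num at hα
  have h1 : 1 - α ^ (m + 2) ≠ 0 := sub_ne_zero.mpr hαn.symm
  simp only [ladderAmplitude, show m + 2 - 1 - 0 = m + 1 by omega,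
    show m + 2 - 1 - 1 = m by omega]
  field_simp
  linear_combination (-α ^ m * (α + 1)) * hα

theorem ladderAmplitude_boundary_last (hα : α ^ 2 - 4 * α + 1 = 0) (hαn : α ^ n ≠ 1)
    (hn : 2 ≤ n) :
    3 * ladderAmplitude α n (n - 1) - ladderAmplitude α n (n - 2) = 1 := by
  have h₀ := ladderAmplitude_symm (α := α) (n := n) 0 (Nat.zero_le _)
  have h₁ := ladderAmplitude_symm (α := α) (n := n) 1 (by omega)
  rw [Nat.sub_zero] at h₀
  rw [show n - 1 - 1 = n - 2 by omega] at h₁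
  rw [h₀, h₁]
  exact ladderAmplitude_boundary_zero hα hαn hn

end ladderAmplitude

theorem resDist_ladder_eq {α : ℝ} {n : ℕ} (hn : 2 ≤ n) (hα : α ^ 2 - 4 * α + 1 = 0)
    (hαn : α ^ n ≠ 1) :
    resDist (pathGraph n □ pathGraph 2)
        (⟨0, zero_lt_two.trans_le hn⟩, 0) (⟨n - 1, Nat.sub_one_lt_of_lt hn⟩, 1)
      = ((n : ℝ) - 1) / 2 + ladderAmplitude α n 0 := by
  have hconn : (pathGraph n □ pathGraph 2).Connected := by
    refine Connected.boxProd ?_ (pathGraph_connected 1)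
    rw [← Nat.sub_add_cancel (by omega : 1 ≤ n)]
    exact pathGraph_connected (n - 1)
  rw [resDist_eq_sub_of_lapm_mulVec_eq hconn (lapm_ladder_mulVec_ladderPotential hn
    (ladderAmplitude_boundary_zero hα hαn hn) (ladderAmplitude_boundary_last hα hαn hn)
    fun k hk => ladderAmplitude_rec hα hk)]
  have hsymm : ladderAmplitude α n (n - 1) = ladderAmplitude α n 0 := by
    simpa using ladderAmplitude_symm (α := α) (n := n) 0 (Nat.zero_le _)
  simp [ladderPotential, hsymm, Nat.cast_sub (by omega : 1 ≤ n)]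
  ring

/-- Closed formula for the diagonal corner-to-corner resistance distance in the
ladder graph `L_n = P_n □ K_2`. -/
theorem resDist_ladder_formula (n : ℕ) (hn : 2 ≤ n) (alpha : ℝ)
    (halpha : alpha = 2 - Real.sqrt 3) :
    resDist ((SimpleGraph.pathGraph n).boxProd (SimpleGraph.pathGraph 2))
        (⟨0, by omega⟩, 0) (⟨n - 1, by omega⟩, 1)
      = ((n : ℝ) - 1) / 2
        + (1 + alpha ^ (n - 1)) * (2 + 2 * alpha ^ (n + 1) + 2 * alpha ^ n + 2 * alpha)
            / (4 * Real.sqrt 3 * (1 - alpha ^ (2 * n))) := by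
  have hs : Real.sqrt 3 ^ 2 = 3 := Real.sq_sqrt (by norm_num)
  have hα : alpha ^ 2 - 4 * alpha + 1 = 0 := by rw [halpha]; linear_combination hs
  have hs₁ : 1 < Real.sqrt 3 := by rw [Real.lt_sqrt zero_le_one]; norm_num
  have hs₂ : Real.sqrt 3 < 2 := by rw [Real.sqrt_lt' two_pos]; norm_num
  have hαn : alpha ^ n < 1 := pow_lt_one₀ (by linarith) (by linarith) (by omega)
  rw [resDist_ladder_eq hn hα hαn.ne]
  congr 1
  have hprod : (3 - alpha) * (1 + alpha) = 2 * Real.sqrt 3 := by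
    rw [halpha]; linear_combination -hs
  have h₁ : 1 - alpha ^ n ≠ 0 := by linarith
  have h₂ : 1 - alpha ^ (2 * n) ≠ 0 := by
    rw [pow_mul']; nlinarith [pow_pos (show 0 < alpha by linarith) n]
  rw [ladderAmplitude, Nat.sub_zero, pow_zero, div_eq_div_iff
    (mul_ne_zero (by linarith) h₁) (mul_ne_zero (by positivity) h₂), pow_succ, pow_mul']
  linear_combination (-2 * (1 + alpha ^ (n - 1)) * (1 - alpha ^ n) * (1 + alpha ^ n)) * hprod
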